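/- arXiv:1501.03027 — 2 statements merged into one kernel-verified Lean document; each statement's English description precedes it below -/
import Mathlib

section
/- Assume additionally that X is a topological space, each U(m) is open in X, and each map T_m : U(m) → X is continuous, open onto its image, and locally injective (so each T_m is a local homeomorphism onto its image), and that the action is directed. For open subsets U, V ⊆ X and m, n ∈ P let Z(U,m,n,V) = {(x, m·n⁻¹, y) ∈ G(X,P,T) : x ∈ U ∩ U(m), y ∈ V ∩ U(n), x·m = y·n}. Then the family B of all such sets Z(U,m,n,V) is a base for a topology on G(X,P,T): B covers G(X,P,T), and for any two members Z₁, Z₂ of B and any point g ∈ Z₁ ∩ Z₂ there is a member Z₃ of B with g ∈ Z₃ ⊆ Z₁ ∩ Z₂. -/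
/-- A (partial, right) action `(X, P, T)` of a monoid `P` on a set `X`:
domains `U m ⊆ X` and maps `x · m := act x m` (only meaningful on `U m`) such that
`U e = X`, `x · e = x`, `x ∈ U (m n) ↔ (x ∈ U m ∧ x·m ∈ U n)`, and in that case
`(x·m)·n = x·(m n)`. -/
structure PartialAction (P : Type*) [Monoid P] (X : Type*) where
  U : P → Set X
  act : X → P → X
  U_one : U 1 = Set.univ
  act_one : ∀ x : X, act x 1 = x
  mem_U_mul : ∀ (x : X) (m n : P), x ∈ U (m * n) ↔ x ∈ U m ∧ act x m ∈ U n
  act_mul : ∀ (x : X) (m n : P), x ∈ U (m * n) → act (act x m) n = act x (m * n)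

/-- `m ≤ n` in `P` iff `n = m·p` for some `p ∈ P`. -/
def pLe {P : Type*} [Monoid P] (m n : P) : Prop := ∃ p : P, n = m * p

/-- The partial action is directed: whenever `U m ∩ U n ≠ ∅` there is an upper bound
`r` of `m` and `n` with `U m ∩ U n = U r`. -/
def PartialAction.IsDirectedAction {P : Type*} [Monoid P] {X : Type*}
    (A : PartialAction P X) : Prop :=
  ∀ m n : P, (A.U m ∩ A.U n).Nonempty →
    ∃ r : P, pLe m r ∧ pLe n r ∧ A.U m ∩ A.U n = A.U r

variable {Q : Type*} [Group Q] (P : Submonoid Q) {X : Type*}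

/-- The semidirect product groupoid `G(X,P,T) ⊆ X × Q × X` of a partial action of a
submonoid `P` of a group `Q`. -/
def GSet (A : PartialAction P X) : Set (X × Q × X) :=
  {g : X × Q × X | ∃ m n : P, g.2.1 = (m : Q) * (n : Q)⁻¹ ∧
    g.1 ∈ A.U m ∧ g.2.2 ∈ A.U n ∧ A.act g.1 m = A.act g.2.2 n}

/-- The basic set `Z(U,m,n,V) = {(x, m n⁻¹, y) : x ∈ U ∩ U(m), y ∈ V ∩ U(n), x·m = y·n}`. -/
def ZSet (A : PartialAction P X) (U : Set X) (m n : P) (V : Set X) : Set (X × Q × X) :=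
  {g : X × Q × X | g.2.1 = (m : Q) * (n : Q)⁻¹ ∧
    g.1 ∈ U ∩ A.U m ∧ g.2.2 ∈ V ∩ A.U n ∧ A.act g.1 m = A.act g.2.2 n}

/-!
Covering is trivial: take `U = V = X`. For the intersection property, let
`g = (x, q, y)` lie in `Z(U₁,m₁,n₁,V₁) ∩ Z(U₂,m₂,n₂,V₂)`. Directedness, applied at `x` and
then at `y`, yields `p₁, p₂ ∈ P` with `m₁p₁ = m₂p₂ =: m₃` and `n₁p₁ = n₂p₂ =: n₃`, where
`x ∈ U(m₃)`; the second extensions coincide because both witnesses have the same degree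
`q`. Then `g ∈ Z(U₃, m₃, n₃, V₃)` with `U₃`, `V₃` cut down by the preimages of open sets
`Wᵢ ∋ x·mᵢ` on which `T_{pᵢ}` is injective: on these, `x'·mᵢpᵢ = y'·nᵢpᵢ` can be
cancelled to `x'·mᵢ = y'·nᵢ`, so `Z(U₃, m₃, n₃, V₃)` lies in both given sets.
-/

namespace PartialAction

variable {M : Type*} [Monoid M] (A : PartialAction M X)

def preimage (m : M) (W : Set X) : Set X :=
  A.U m ∩ (fun x => A.act x m) ⁻¹' W

variable {A}

theorem isOpen_preimage [TopologicalSpace X] {m : M} {W : Set X} (hU : IsOpen (A.U m))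
    (hT : ContinuousOn (fun x => A.act x m) (A.U m)) (hW : IsOpen W) :
    IsOpen (A.preimage m W) :=
  hT.isOpen_inter_preimage hU hW

theorem act_mem_U_of_mem_U_mul {x : X} {m n : M} (h : x ∈ A.U (m * n)) : A.act x m ∈ A.U n :=
  ((A.mem_U_mul x m n).1 h).2

theorem mem_U_mul_of_act_eq {x y : X} {m n p : M} (hx : x ∈ A.U (m * p)) (hy : y ∈ A.U n)
    (h : A.act x m = A.act y n) : y ∈ A.U (n * p) :=
  (A.mem_U_mul y n p).2 ⟨hy, h ▸ act_mem_U_of_mem_U_mul hx⟩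

theorem act_mul_eq_of_act_eq {x y : X} {m n p : M} (hx : x ∈ A.U (m * p))
    (hy : y ∈ A.U (n * p)) (h : A.act x m = A.act y n) :
    A.act x (m * p) = A.act y (n * p) := by
  rw [← A.act_mul x m p hx, ← A.act_mul y n p hy, h]

theorem act_eq_of_act_mul_eq {x y : X} {m n p : M} {W : Set X}
    (hinj : Set.InjOn (fun z => A.act z p) (W ∩ A.U p)) (hx : x ∈ A.U (m * p))
    (hy : y ∈ A.U (n * p)) (hxW : A.act x m ∈ W) (hyW : A.act y n ∈ W)
    (h : A.act x (m * p) = A.act y (n * p)) : A.act x m = A.act y n :=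
  hinj ⟨hxW, act_mem_U_of_mem_U_mul hx⟩ ⟨hyW, act_mem_U_of_mem_U_mul hy⟩ <| by
    simpa only [A.act_mul x m p hx, A.act_mul y n p hy] using h

end PartialAction

open PartialAction

theorem eq_of_mul_inv_eq_of_mul_eq {G : Type*} [Group G] {m₁ n₁ m₂ n₂ a b c d : G}
    (hq : m₁ * n₁⁻¹ = m₂ * n₂⁻¹) (hm : m₁ * a = m₂ * b) (hn : n₁ * a * c = n₂ * b * d) :
    c = d := by
  have : m₁ * a * c = m₁ * a * d :=
    calc m₁ * a * c = (m₁ * n₁⁻¹) * (n₁ * a * c) := by group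
      _ = (m₂ * n₂⁻¹) * (n₂ * b * d) := by rw [hq, hn]
      _ = m₂ * b * d := by group
      _ = m₁ * a * d := by rw [hm]
  exact mul_left_cancel this

section Groupoid

variable {P} {A : PartialAction P X}

theorem exists_common_extension (hdir : A.IsDirectedAction) {x y : X} {m₁ n₁ m₂ n₂ : P}
    (hx₁ : x ∈ A.U m₁) (hx₂ : x ∈ A.U m₂) (hy₁ : y ∈ A.U n₁) (hy₂ : y ∈ A.U n₂)
    (h₁ : A.act x m₁ = A.act y n₁) (h₂ : A.act x m₂ = A.act y n₂)
    (hq : (m₁ : Q) * (n₁ : Q)⁻¹ = m₂ * (n₂ : Q)⁻¹) :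
    ∃ p₁ p₂ : P, m₁ * p₁ = m₂ * p₂ ∧ n₁ * p₁ = n₂ * p₂ ∧ x ∈ A.U (m₁ * p₁) := by
  obtain ⟨r, ⟨a, rfl⟩, ⟨b, hb⟩, hr⟩ := hdir m₁ m₂ ⟨x, hx₁, hx₂⟩
  have hxa : x ∈ A.U (m₁ * a) := hr ▸ ⟨hx₁, hx₂⟩
  have hxb : x ∈ A.U (m₂ * b) := hb ▸ hxa
  have hya : y ∈ A.U (n₁ * a) := mem_U_mul_of_act_eq hxa hy₁ h₁
  have hyb : y ∈ A.U (n₂ * b) := mem_U_mul_of_act_eq hxb hy₂ h₂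
  obtain ⟨s, ⟨c, rfl⟩, ⟨d, hd⟩, hs⟩ := hdir (n₁ * a) (n₂ * b) ⟨y, hya, hyb⟩
  -- the degree `q` forces the two extensions on the `y` side to agree
  have hcd : c = d := Subtype.ext <| eq_of_mul_inv_eq_of_mul_eq hq
    (by simpa only [Submonoid.coe_mul] using congrArg Subtype.val hb)
    (by simpa only [Submonoid.coe_mul] using congrArg Subtype.val hd)
  subst hcd
  have hyc : y ∈ A.U (n₁ * a * c) := hs ▸ ⟨hya, hyb⟩
  have hxac : x ∈ A.U (m₁ * a * c) :=
    mem_U_mul_of_act_eq hyc hxa (act_mul_eq_of_act_eq hxa hya h₁).symm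
  refine ⟨a * c, b * c, ?_, ?_, ?_⟩
  · rw [← mul_assoc, ← mul_assoc, hb]
  · rw [← mul_assoc, ← mul_assoc, hd]
  · rwa [← mul_assoc]

theorem ZSet_inter_ZSet (U U' V V' : Set X) (m n : P) :
    ZSet P A U m n V ∩ ZSet P A U' m n V' = ZSet P A (U ∩ U') m n (V ∩ V') := by
  ext g
  simp only [ZSet, Set.mem_inter_iff, Set.mem_ofPred_eq]
  tauto

theorem mem_ZSet_mul {U V W : Set X} {m n p : P} {g : X × Q × X} (hg : g ∈ ZSet P A U m n V)
    (hx : g.1 ∈ A.U (m * p)) (hW : A.act g.1 m ∈ W) :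
    g ∈ ZSet P A (U ∩ A.preimage m W) (m * p) (n * p) (V ∩ A.preimage n W) := by
  obtain ⟨hq, ⟨hxU, hxm⟩, ⟨hyV, hyn⟩, hact⟩ := hg
  have hy : g.2.2 ∈ A.U (n * p) := mem_U_mul_of_act_eq hx hyn hact
  refine ⟨?_, ⟨⟨hxU, hxm, hW⟩, hx⟩, ⟨⟨hyV, hyn, (hact ▸ hW : A.act g.2.2 n ∈ W)⟩, hy⟩,
    act_mul_eq_of_act_eq hx hy hact⟩
  rw [hq]
  push_cast
  group

theorem ZSet_mul_subset {U V W : Set X} {m n p : P}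
    (hinj : Set.InjOn (fun z => A.act z p) (W ∩ A.U p)) :
    ZSet P A (U ∩ A.preimage m W) (m * p) (n * p) (V ∩ A.preimage n W) ⊆ ZSet P A U m n V := by
  rintro g ⟨hq, ⟨⟨hxU, hxm, hxW⟩, hx⟩, ⟨⟨hyV, hyn, hyW⟩, hy⟩, hact⟩
  refine ⟨?_, ⟨hxU, hxm⟩, ⟨hyV, hyn⟩, act_eq_of_act_mul_eq hinj hx hy hxW hyW hact⟩
  rw [hq]
  push_cast
  group

end Groupoid

theorem stmt5 [TopologicalSpace X] (A : PartialAction P X)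
    (hopen : ∀ m : P, IsOpen (A.U m))
    (hcont : ∀ m : P, ContinuousOn (fun x => A.act x m) (A.U m))
    (hlocinj : ∀ (m : P), ∀ x ∈ A.U m, ∃ W : Set X, IsOpen W ∧ x ∈ W ∧
      Set.InjOn (fun x => A.act x m) (W ∩ A.U m))
    (hdir : A.IsDirectedAction) :
    (∀ g ∈ GSet P A, ∃ (U V : Set X) (m n : P),
      IsOpen U ∧ IsOpen V ∧ g ∈ ZSet P A U m n V) ∧
    (∀ (U₁ V₁ U₂ V₂ : Set X) (m₁ n₁ m₂ n₂ : P),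
      IsOpen U₁ → IsOpen V₁ → IsOpen U₂ → IsOpen V₂ →
      ∀ g ∈ ZSet P A U₁ m₁ n₁ V₁ ∩ ZSet P A U₂ m₂ n₂ V₂,
        ∃ (U₃ V₃ : Set X) (m₃ n₃ : P), IsOpen U₃ ∧ IsOpen V₃ ∧
          g ∈ ZSet P A U₃ m₃ n₃ V₃ ∧
          ZSet P A U₃ m₃ n₃ V₃ ⊆ ZSet P A U₁ m₁ n₁ V₁ ∩ ZSet P A U₂ m₂ n₂ V₂) := by
  refine ⟨fun g ⟨m, n, hq, hx, hy, h⟩ =>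
    ⟨Set.univ, Set.univ, m, n, isOpen_univ, isOpen_univ, hq, ⟨trivial, hx⟩, ⟨trivial, hy⟩, h⟩, ?_⟩
  intro U₁ V₁ U₂ V₂ m₁ n₁ m₂ n₂ hU₁ hV₁ hU₂ hV₂ g ⟨hg₁, hg₂⟩
  obtain ⟨p₁, p₂, hm, hn, hx⟩ := exists_common_extension hdir hg₁.2.1.2 hg₂.2.1.2 hg₁.2.2.1.2
    hg₂.2.2.1.2 hg₁.2.2.2 hg₂.2.2.2 (hg₁.1.symm.trans hg₂.1)
  have hx₂ : g.1 ∈ A.U (m₂ * p₂) := hm ▸ hx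
  obtain ⟨W₁, hW₁, hxW₁, hinj₁⟩ := hlocinj p₁ _ (act_mem_U_of_mem_U_mul hx)
  obtain ⟨W₂, hW₂, hxW₂, hinj₂⟩ := hlocinj p₂ _ (act_mem_U_of_mem_U_mul hx₂)
  have isOpen_cut {U : Set X} {m : P} {W : Set X} (hU : IsOpen U) (hW : IsOpen W) :
      IsOpen (U ∩ A.preimage m W) := hU.inter (isOpen_preimage (hopen m) (hcont m) hW)
  refine ⟨U₁ ∩ A.preimage m₁ W₁ ∩ (U₂ ∩ A.preimage m₂ W₂),
    V₁ ∩ A.preimage n₁ W₁ ∩ (V₂ ∩ A.preimage n₂ W₂), m₁ * p₁, n₁ * p₁,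
    (isOpen_cut hU₁ hW₁).inter (isOpen_cut hU₂ hW₂),
    (isOpen_cut hV₁ hW₁).inter (isOpen_cut hV₂ hW₂), ?_, ?_⟩
  · rw [← ZSet_inter_ZSet]
    exact ⟨mem_ZSet_mul hg₁ hx hxW₁, hm ▸ hn ▸ mem_ZSet_mul hg₂ hx₂ hxW₂⟩
  · rw [← ZSet_inter_ZSet]
    nth_rw 2 [hm, hn]
    exact Set.inter_subset_inter (ZSet_mul_subset hinj₁) (ZSet_mul_subset hinj₂)
end

section
/- Suppose the partial action (X,P,T) is directed. Then every finite subset S ⊆ P is contained in a finite action-directed subset F of P. -/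
/-- A subset `F ⊆ P` is action-directed if `e ∈ F` and whenever `m, n ∈ F` with
`U m ∩ U n ≠ ∅` there is `r ∈ F` with `m ≤ r`, `n ≤ r` and `U r = U m ∩ U n`. -/
def PartialAction.ActionDirected {P : Type*} [Monoid P] {X : Type*}
    (A : PartialAction P X) (F : Set P) : Prop :=
  (1 : P) ∈ F ∧
  ∀ m ∈ F, ∀ n ∈ F, (A.U m ∩ A.U n).Nonempty →
    ∃ r ∈ F, pLe m r ∧ pLe n r ∧ A.U r = A.U m ∩ A.U n

section pLe

variable {P : Type*} [Monoid P]

lemma pLe_refl (m : P) : pLe m m := ⟨1, (mul_one m).symm⟩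

lemma pLe_trans {a b c : P} (hab : pLe a b) (hbc : pLe b c) : pLe a c := by
  obtain ⟨p, rfl⟩ := hab
  obtain ⟨q, rfl⟩ := hbc
  exact ⟨p * q, mul_assoc _ _ _⟩

lemma one_pLe (m : P) : pLe 1 m := ⟨m, (one_mul m).symm⟩

end pLe

namespace PartialAction

variable {P : Type*} [Monoid P] {X : Type*} {A : PartialAction P X}

lemma actionDirected_insert_one {F : Set P}
    (hF : ∀ m ∈ F, ∀ n ∈ F, (A.U m ∩ A.U n).Nonempty →
      ∃ r ∈ F, pLe m r ∧ pLe n r ∧ A.U r = A.U m ∩ A.U n) :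
    A.ActionDirected (insert 1 F) := by
  refine ⟨Set.mem_insert 1 F, ?_⟩
  rintro m (rfl | hm) n (rfl | hn) hmn
  · exact ⟨1, Set.mem_insert 1 F, pLe_refl 1, pLe_refl 1, (Set.inter_self _).symm⟩
  · exact ⟨n, Set.mem_insert_of_mem 1 hn, one_pLe n, pLe_refl n, by rw [A.U_one, Set.univ_inter]⟩
  · exact ⟨m, Set.mem_insert_of_mem 1 hm, pLe_refl m, one_pLe m, by rw [A.U_one, Set.inter_univ]⟩
  · obtain ⟨r, hr, hmr, hnr, hrU⟩ := hF m hm n hn hmn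
    exact ⟨r, Set.mem_insert_of_mem 1 hr, hmr, hnr, hrU⟩

open Classical in
noncomputable def meets (A : PartialAction P X) (S : Finset P) : Finset (Set X) :=
  S.powerset.image fun T => ⋂ t ∈ T, A.U t

lemma U_mem_meets {S : Finset P} {s : P} (hs : s ∈ S) : A.U s ∈ A.meets S :=
  Finset.mem_image.2 ⟨{s}, by simpa using hs, by simp⟩

lemma inter_mem_meets {S : Finset P} {V W : Set X} (hV : V ∈ A.meets S) (hW : W ∈ A.meets S) :
    V ∩ W ∈ A.meets S := by
  classical
  obtain ⟨T, hT, rfl⟩ := Finset.mem_image.1 hV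
  obtain ⟨T', hT', rfl⟩ := Finset.mem_image.1 hW
  refine Finset.mem_image.2 ⟨T ∪ T', ?_, Finset.set_biInter_inter T T' A.U⟩
  exact Finset.mem_powerset.2 (Finset.union_subset (Finset.mem_powerset.1 hT)
    (Finset.mem_powerset.1 hT'))

lemma actionDirected_of_antitone_section [DecidableEq P] {S : Finset P} {𝒲 : Finset (Set X)}
    [DecidablePred (Set.Nonempty : Set X → Prop)] {g : Set X → P}
    (hS : ∀ s ∈ S, A.U s ∈ 𝒲) (h𝒲 : ∀ V ∈ 𝒲, ∀ W ∈ 𝒲, V ∩ W ∈ 𝒲)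
    (hg : ∀ V ∈ 𝒲.filter Set.Nonempty, A.U (g V) = V ∧ (∀ s ∈ S, V ⊆ A.U s → pLe s (g V)) ∧
      ∀ W ∈ 𝒲.filter Set.Nonempty, V ⊆ W → pLe (g W) (g V)) :
    A.ActionDirected (insert 1 (S ∪ (𝒲.filter Set.Nonempty).image g) : Finset P) := by
  set F := S ∪ (𝒲.filter Set.Nonempty).image g
  have hF𝒲 : ∀ m ∈ F, A.U m ∈ 𝒲 := by
    simp only [F, Finset.mem_union, Finset.mem_image]
    rintro m (hm | ⟨V, hV, rfl⟩)
    · exact hS m hm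
    · rw [(hg V hV).1]
      exact (Finset.mem_filter.1 hV).1
  have hle : ∀ m ∈ F, ∀ V ∈ 𝒲.filter Set.Nonempty, V ⊆ A.U m → pLe m (g V) := by
    simp only [F, Finset.mem_union, Finset.mem_image]
    rintro m (hm | ⟨W, hW, rfl⟩) V hV hVm
    · exact (hg V hV).2.1 m hm hVm
    · exact (hg V hV).2.2 W hW (by rwa [(hg W hW).1] at hVm)
  rw [Finset.coe_insert]
  refine actionDirected_insert_one fun m hm n hn hmn => ?_
  have hV : A.U m ∩ A.U n ∈ 𝒲.filter Set.Nonempty :=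
    Finset.mem_filter.2 ⟨h𝒲 _ (hF𝒲 m hm) _ (hF𝒲 n hn), hmn⟩
  refine ⟨g _, Finset.mem_union_right S (Finset.mem_image_of_mem g hV), ?_, ?_, (hg _ hV).1⟩
  · exact hle m hm _ hV Set.inter_subset_left
  · exact hle n hn _ hV Set.inter_subset_right

namespace IsDirectedAction

variable (hdir : A.IsDirectedAction)
include hdir

lemma exists_U_eq_biInter (T : Finset P) (hT : (⋂ t ∈ T, A.U t).Nonempty) :
    ∃ b : P, A.U b = ⋂ t ∈ T, A.U t := by
  classical
  induction T using Finset.induction_on with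
  | empty => exact ⟨1, by simp [A.U_one]⟩
  | insert a T _ ih =>
    rw [Finset.set_biInter_insert] at hT ⊢
    obtain ⟨b, hb⟩ := ih (hT.mono Set.inter_subset_right)
    obtain ⟨r, -, -, hr⟩ := hdir a b (by rwa [hb])
    exact ⟨r, by rw [← hr, hb]⟩

lemma mem_range_of_mem_meets {S : Finset P} {V : Set X}
    (hV : V ∈ A.meets S) (hne : V.Nonempty) : V ∈ Set.range A.U := by
  obtain ⟨T, -, rfl⟩ := Finset.mem_image.1 hV
  exact hdir.exists_U_eq_biInter T hne

lemma exists_upper_bound_of_U_subset {b : P} (hb : (A.U b).Nonempty) (L : Finset P)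
    (hL : ∀ l ∈ L, A.U b ⊆ A.U l) :
    ∃ r : P, A.U r = A.U b ∧ pLe b r ∧ ∀ l ∈ L, pLe l r := by
  classical
  induction L using Finset.induction_on with
  | empty => exact ⟨b, rfl, pLe_refl b, by simp⟩
  | insert x L _ ih =>
    obtain ⟨r₀, hr₀U, hbr₀, hLr₀⟩ := ih fun l hl => hL l (Finset.mem_insert_of_mem hl)
    have hmeet : A.U r₀ ∩ A.U x = A.U b := by
      rw [hr₀U]
      exact Set.inter_eq_left.2 (hL x (Finset.mem_insert_self x L))
    obtain ⟨r, hr₀r, hxr, hrU⟩ := hdir r₀ x (by rwa [hmeet])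
    refine ⟨r, by rw [← hrU, hmeet], pLe_trans hbr₀ hr₀r, ?_⟩
    rintro l hl
    rcases Finset.mem_insert.1 hl with rfl | hl
    · exact hxr
    · exact pLe_trans (hLr₀ l hl) hr₀r

/-- The recursion runs from minimal domains upwards: removing a minimal `V₀ ∈ 𝒱`, the value at
`V₀` only has to dominate values at strictly larger members of `𝒱`. -/
lemma exists_antitone_section (L : Finset P) (𝒱 : Finset (Set X))
    (h𝒱 : ∀ V ∈ 𝒱, V.Nonempty ∧ V ∈ Set.range A.U) :
    ∃ g : Set X → P, ∀ V ∈ 𝒱, A.U (g V) = V ∧ (∀ l ∈ L, V ⊆ A.U l → pLe l (g V)) ∧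
      ∀ W ∈ 𝒱, V ⊆ W → pLe (g W) (g V) := by
  classical
  induction 𝒱 using Finset.strongInduction with
  | H 𝒱 ih =>
  rcases 𝒱.eq_empty_or_nonempty with rfl | hne
  · exact ⟨fun _ => 1, by simp⟩
  obtain ⟨V₀, hV₀⟩ := Finset.exists_minimal hne
  have hV₀𝒱 : V₀ ∈ 𝒱 := hV₀.prop
  obtain ⟨g, hg⟩ := ih (𝒱.erase V₀) (Finset.erase_ssubset hV₀𝒱)
    fun V hV => h𝒱 V (Finset.mem_of_mem_erase hV)
  obtain ⟨hV₀ne, b, hb⟩ := h𝒱 V₀ hV₀𝒱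
  subst hb
  obtain ⟨r, hrU, -, hr⟩ := hdir.exists_upper_bound_of_U_subset hV₀ne
    (L.filter (A.U b ⊆ A.U ·) ∪ ((𝒱.erase (A.U b)).filter (A.U b ⊆ ·)).image g) (by
      simp only [Finset.mem_union, Finset.mem_filter, Finset.mem_image]
      rintro l (⟨-, hl⟩ | ⟨W, ⟨hW, hbW⟩, rfl⟩)
      · exact hl
      · rw [(hg W hW).1]
        exact hbW)
  refine ⟨Function.update g (A.U b) r, fun V hV => ?_⟩
  by_cases hVb : V = A.U b
  · subst hVb
    refine ⟨by rw [Function.update_self, hrU], fun l hl hbl => ?_, fun W hW hbW => ?_⟩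
    · rw [Function.update_self]
      exact hr l (Finset.mem_union_left _ (Finset.mem_filter.2 ⟨hl, hbl⟩))
    · rcases eq_or_ne W (A.U b) with rfl | hWb
      · exact pLe_refl _
      rw [Function.update_self, Function.update_of_ne hWb]
      exact hr (g W) (Finset.mem_union_right _ (Finset.mem_image_of_mem g
        (Finset.mem_filter.2 ⟨Finset.mem_erase.2 ⟨hWb, hW⟩, hbW⟩)))
  · have hV' : V ∈ 𝒱.erase (A.U b) := Finset.mem_erase.2 ⟨hVb, hV⟩
    obtain ⟨hgU, hgL, hgW⟩ := hg V hV'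
    rw [Function.update_of_ne hVb]
    refine ⟨hgU, hgL, fun W hW hVW => ?_⟩
    have hWb : W ≠ A.U b := by
      rintro rfl
      exact hVb (hV₀.eq_of_le hV hVW)
    rw [Function.update_of_ne hWb]
    exact hgW W (Finset.mem_erase.2 ⟨hWb, hW⟩) hVW

end IsDirectedAction

end PartialAction

/-- if the partial action `(X,P,T)` is directed, then every finite
`S ⊆ P` is contained in a finite action-directed subset `F ⊆ P`. -/
theorem stmt8 {P : Type*} [Monoid P] {X : Type*} (A : PartialAction P X)
    (hdir : A.IsDirectedAction) (S : Finset P) :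
    ∃ F : Finset P, S ⊆ F ∧ A.ActionDirected (F : Set P) := by
  classical
  obtain ⟨g, hg⟩ := hdir.exists_antitone_section S ((A.meets S).filter Set.Nonempty)
    fun V hV => have hV := Finset.mem_filter.1 hV
      ⟨hV.2, hdir.mem_range_of_mem_meets hV.1 hV.2⟩
  refine ⟨_, fun s hs => ?_, A.actionDirected_of_antitone_section
    (fun s hs => A.U_mem_meets hs) (fun V hV W hW => A.inter_mem_meets hV hW) hg⟩
  exact Finset.mem_insert_of_mem (Finset.mem_union_left _ hs)
end
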